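/- Let E: 0 → E^0 → E^1 → ... → E^n → 0 be a complex of graded free S-modules and let F be a graded free resolution of a finitely generated graded S-module M. Then ⟨F, E⟩ := Σ_j χ( F_{≥j} ⊗ H^j(E) ) ≥ 0, where χ denotes the alternating sum Σ_{k≥j} (−1)^{k−j} dim_K ( (F_k ⊗ H^j(E))_0 ) of dimensions of degree-0 components. -/

import Mathlib

open MvPolynomial Finset Module

noncomputable section

/-- The standard graded polynomial ring `S = K[x_1, …, x_n]`. -/
abbrev PolyS (K : Type) [Field K] (n : ℕ) : Type := MvPolynomial (Fin n) K

/-- The `K`-subspace of homogeneous polynomials of integer degree `z`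
(it is `0` if `z < 0`). -/
def homogZ (K : Type) [Field K] (n : ℕ) (z : ℤ) : Submodule K (PolyS K n) :=
  ⨆ (_ : 0 ≤ z), MvPolynomial.homogeneousSubmodule (Fin n) K z.toNat

/-- The degree-`ℓ` piece of the graded free module `⊕ₚ S(-dg p)`. -/
def freePiece {K : Type} [Field K] {n r : ℕ} (dg : Fin r → ℤ) (ℓ : ℤ) :
    Submodule K (Fin r → PolyS K n) :=
  Submodule.pi Set.univ fun p => homogZ K n (ℓ - dg p)

/-- A (homologically indexed) finite complex of graded free `S`-modules
`F₀ ← F₁ ← ⋯ ← F_len ← 0`, where `Fᵢ = ⊕ₚ S(-deg i p)` and the (degree `0`)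
map `Fᵢ₊₁ → Fᵢ` is given by the matrix `dd i`, whose entries are homogeneous
of the appropriate degrees. -/
structure FreeComplex (K : Type) [Field K] (n : ℕ) where
  len : ℕ
  rk : ℕ → ℕ
  deg : (i : ℕ) → Fin (rk i) → ℤ
  dd : (i : ℕ) → Matrix (Fin (rk i)) (Fin (rk (i+1))) (PolyS K n)
  rk_eq_zero : ∀ i, len < i → rk i = 0
  isHomog : ∀ i p q, dd i p q ∈ homogZ K n (deg (i+1) q - deg i p)
  isComplex : ∀ i, dd i * dd (i+1) = 0

variable {K : Type} [Field K] {n : ℕ}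

/-- `F` is exact in positive homological degrees; that is, it is a graded free
resolution of the finitely generated graded module `M = coker (F₁ → F₀)`. -/
def IsResolution (F : FreeComplex K n) : Prop :=
  ∀ i, LinearMap.ker ((F.dd i).mulVecLin) = LinearMap.range ((F.dd (i+1)).mulVecLin)

/-- The complex is minimal: entries of the differentials lie in the maximal ideal,
i.e. all (constant) entries between generators of equal degrees vanish. -/
def IsMinimal (F : FreeComplex K n) : Prop :=
  ∀ i p q, F.deg (i+1) q = F.deg i p → F.dd i p q = 0

/-- Betti number `β_{i,j}`: the number of generators of `Fᵢ` of degree `j`. -/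
def bettiNum (F : FreeComplex K n) (i : ℕ) (j : ℤ) : ℕ :=
  (Finset.univ.filter fun p => F.deg i p = j).card

/-- The dimension of the degree-`ℓ` piece of the module `M = coker (F₁ → F₀)`
resolved by `F`. -/
def MPieceDim (F : FreeComplex K n) (ℓ : ℤ) : ℕ :=
  finrank K ((freePiece (F.deg 0) ℓ) ⧸
    (Submodule.comap (freePiece (F.deg 0) ℓ).subtype
      ((LinearMap.range ((F.dd 0).mulVecLin)).restrictScalars K)))

/-- The Hilbert polynomial of the twisted free module `S(-a)` in `n` variables:
`binom (t - a + n - 1, n - 1)`. -/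
def genHilb (n : ℕ) (a : ℤ) : Polynomial ℚ :=
  if n = 0 then 0 else
    Polynomial.C (((n - 1).factorial : ℚ))⁻¹ *
      ∏ k ∈ Finset.range (n - 1),
        (Polynomial.X - Polynomial.C (a : ℚ) + Polynomial.C ((k : ℚ) + 1))

/-- The Hilbert polynomial of `M = coker (F₁ → F₀)`, computed from the free
resolution `F` by additivity. -/
def hilbPoly (F : FreeComplex K n) : Polynomial ℚ :=
  ∑ i ∈ Finset.range (F.len + 1),
    Polynomial.C ((-1 : ℚ) ^ i) * ∑ p : Fin (F.rk i), genHilb n (F.deg i p)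

/-- The Krull dimension of a module read off from its Hilbert polynomial:
`0` for the zero polynomial (finite length), `deg + 1` otherwise. -/
def polyDim (P : Polynomial ℚ) : ℕ := if P = 0 then 0 else P.natDegree + 1

/-- `M = coker (F₁ → F₀)` is a Cohen-Macaulay module of codimension `c`:
`F` is a minimal free resolution of length exactly `c` (so `pd M = c`, and by
Auslander–Buchsbaum `depth M = n - c`) and `dim M = n - c`. -/
def IsCMcodim (F : FreeComplex K n) (c : ℕ) : Prop :=
  IsResolution F ∧ IsMinimal F ∧ (∀ i, c < i → F.rk i = 0) ∧ F.rk c ≠ 0 ∧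
    polyDim (hilbPoly F) = n - c

/-- The multiplicity `e(M)` of a module of codimension `c`, computed from the
Betti numbers of a free resolution:
`e(M) = ((-1)^c / c!) ⬝ Σ_{i,j} (-1)^i β_{i,j} j^c`. -/
def multQ (F : FreeComplex K n) (c : ℕ) : ℚ :=
  ((-1 : ℚ) ^ c / c.factorial) *
    ∑ i ∈ Finset.range (F.len + 1),
      (-1 : ℚ) ^ i * ∑ p : Fin (F.rk i), ((F.deg i p : ℚ)) ^ c

/-- A (cohomologically indexed) finite complex of graded free `S`-modules
`0 → E⁰ → E¹ → ⋯ → E^len → 0`, where `Eⁱ = ⊕ₚ S(-deg i p)` and the (degree `0`)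
map `Eⁱ → Eⁱ⁺¹` is given by the matrix `dd i`. -/
structure CoComplex (K : Type) [Field K] (n : ℕ) where
  len : ℕ
  rk : ℕ → ℕ
  deg : (i : ℕ) → Fin (rk i) → ℤ
  dd : (i : ℕ) → Matrix (Fin (rk (i+1))) (Fin (rk i)) (PolyS K n)
  rk_eq_zero : ∀ i, len < i → rk i = 0
  isHomog : ∀ i p q, dd i p q ∈ homogZ K n (deg i q - deg (i+1) p)
  isComplex : ∀ i, dd (i+1) * dd i = 0

/-- The degree-`ℓ` part of the cocycles at cohomological position `i`. -/
def CoComplex.kerPiece (E : CoComplex K n) (i : ℕ) (ℓ : ℤ) :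
    Submodule K (Fin (E.rk i) → PolyS K n) :=
  ((LinearMap.ker ((E.dd i).mulVecLin)).restrictScalars K) ⊓ freePiece (E.deg i) ℓ

/-- The coboundaries at cohomological position `i` (as a `K`-subspace). -/
def CoComplex.imSub (E : CoComplex K n) : (i : ℕ) → Submodule K (Fin (E.rk i) → PolyS K n)
  | 0 => ⊥
  | (j+1) => (LinearMap.range ((E.dd j).mulVecLin)).restrictScalars K

/-- `dim_K (Hⁱ(E))_ℓ`, the dimension of the degree-`ℓ` component of the `i`-th
cohomology module of the complex `E`. -/
def cohomDim (E : CoComplex K n) (i : ℕ) (ℓ : ℤ) : ℕ :=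
  finrank K ((E.kerPiece i ℓ) ⧸
    (Submodule.comap (E.kerPiece i ℓ).subtype (E.imSub i)))

/-- The bilinear pairing `⟨F, E⟩ = Σ_{j ≤ i, k} (-1)^{i-j} β_{i,k}(F) ⬝ dim_K (H^j E)_{-k}`
of a free resolution `F` against a free cocomplex `E`. -/
def pairing (F : FreeComplex K n) (E : CoComplex K n) : ℤ :=
  ∑ i ∈ Finset.range (F.len + 1), ∑ j ∈ Finset.range (i + 1),
    (-1 : ℤ) ^ (i - j) * ∑ p : Fin (F.rk i), (cohomDim E j (-(F.deg i p)) : ℤ)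

/-- The modified pairing `⟨F, E⟩_{c,τ}`: terms with `j ≤ i` are kept when `j < τ`
or `j ≤ i - 2`, and the terms with `j = τ`, `i = τ + ε` (`ε ∈ {0,1}`) are kept
only when the degree `k` of the generator satisfies `k ≤ c + ε`. -/
def pairingMod (F : FreeComplex K n) (E : CoComplex K n) (c : ℤ) (τ : ℕ) : ℤ :=
  (∑ i ∈ Finset.range (F.len + 1), ∑ j ∈ Finset.range (i + 1),
    if j < τ ∨ j + 2 ≤ i then
      (-1 : ℤ) ^ (i - j) * ∑ p : Fin (F.rk i), (cohomDim E j (-(F.deg i p)) : ℤ)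
    else 0) +
  ∑ ε ∈ Finset.range 2,
    (-1 : ℤ) ^ ε * ∑ p ∈ Finset.univ.filter (fun p => F.deg (τ + ε) p ≤ c + ε),
      (cohomDim E τ (-(F.deg (τ + ε) p)) : ℤ)

/-!
Write `X i j = (Fᵢ ⊗ Eʲ)₀` (matrices `u` with `u p q` homogeneous of degree
`-deg Fᵢ p - deg Eʲ q`), a double complex with horizontal maps from `F` and vertical maps
from `E`. Since `Fᵢ` is free, the vertical cohomology of column `i` has dimension
`∑ₚ dim (Hʲ E)_{-deg Fᵢ p}`, and since `F` is exact and `Eʲ` is free, every row is exact in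
positive degrees. Telescoping along columns and rows turns `⟨F, E⟩` into
`∑ⱼ (dim Z_v(X j j) - dim B_h(X j j))`, where `Z_v` are the vertical cocycles and `B_h` the
horizontal boundaries. Each summand is at least `dⱼ - dⱼ₊₁` with
`dⱼ = dim Z_v(X j j) - dim (Z_v ∩ B_h)(X j j) ≥ 0`, because `v(B_h(X j j)) = h(v(X (j+1) j))`
and by row exactness the kernel of `h` on `v(X (j+1) j) ⊆ Z_v(X (j+1) (j+1))` lies in
`B_h(X (j+1) (j+1))`. The sum therefore telescopes to `d₀ - d_{len+1} = d₀ ≥ 0`.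
-/

section LinearAlgebra

variable {k : Type*} [DivisionRing k]

theorem LinearMap.finrank_map_add_finrank_ker_inf {V W : Type*} [AddCommGroup V] [Module k V]
    [AddCommGroup W] [Module k W] (f : V →ₗ[k] W) (P : Submodule k V) [FiniteDimensional k P] :
    finrank k (P.map f) + finrank k (LinearMap.ker f ⊓ P : Submodule k V) = finrank k P := by
  rw [← (f.domRestrict P).finrank_range_add_finrank_ker, LinearMap.range_domRestrict,
    LinearMap.ker_domRestrict, ← Submodule.finrank_map_subtype_eq, Submodule.map_comap_subtype,
    inf_comm]

theorem sum_range_neg_one_pow_sub_mul_add {R : Type*} [CommRing R] (b : ℕ → R) (m : ℕ) :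
    ∑ j ∈ range (m + 1), (-1 : R) ^ (m - j) * (b j + b (j + 1)) = b (m + 1) + (-1) ^ m * b 0 := by
  induction m with
  | zero => simp [add_comm]
  | succ m ih =>
    have hflip : ∑ j ∈ range (m + 1), (-1 : R) ^ (m + 1 - j) * (b j + b (j + 1)) =
        -∑ j ∈ range (m + 1), (-1 : R) ^ (m - j) * (b j + b (j + 1)) := by
      rw [← sum_neg_distrib]
      refine sum_congr rfl fun j hj => ?_
      rw [Nat.succ_sub (Nat.lt_succ_iff.mp (mem_range.mp hj)), pow_succ]
      ring
    rw [sum_range_succ, hflip, ih, Nat.sub_self, pow_succ]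
    ring

theorem sum_Ico_neg_one_pow_sub_mul_of_add {R : Type*} [CommRing R] (x a : ℕ → R) {j L : ℕ}
    (hjL : j ≤ L) (hx : ∀ i, x (i + 1) = a i + a (i + 1)) :
    ∑ i ∈ Ico j (L + 1), (-1 : R) ^ (i - j) * x i = x j - a j + (-1) ^ (L - j) * a L := by
  induction L, hjL using Nat.le_induction with
  | base => simp
  | succ L hjL ih =>
    rw [sum_Ico_succ_top (by omega), ih, hx, Nat.succ_sub hjL, pow_succ]
    ring

def Submodule.piUnivEquiv {R ι : Type*} [Semiring R] {φ : ι → Type*}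
    [∀ i, AddCommMonoid (φ i)] [∀ i, Module R (φ i)] (p : ∀ i, Submodule R (φ i)) :
    Submodule.pi Set.univ p ≃ₗ[R] ∀ i, p i where
  toFun x i := ⟨x.1 i, x.2 i trivial⟩
  invFun y := ⟨fun i => y i, fun i _ => (y i).2⟩
  map_add' _ _ := rfl
  map_smul' _ _ := rfl
  left_inv _ := rfl
  right_inv _ := rfl

instance {R ι : Type*} [Semiring R] [Finite ι] {φ : ι → Type*} [∀ i, AddCommMonoid (φ i)]
    [∀ i, Module R (φ i)] (p : ∀ i, Submodule R (φ i)) [∀ i, Module.Finite R (p i)] :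
    Module.Finite R (Submodule.pi Set.univ p) :=
  Module.Finite.equiv (Submodule.piUnivEquiv p).symm

theorem Submodule.finrank_pi_univ {ι : Type*} [Fintype ι] {φ : ι → Type*}
    [∀ i, AddCommGroup (φ i)] [∀ i, Module k (φ i)] (p : ∀ i, Submodule k (φ i))
    [∀ i, FiniteDimensional k (p i)] :
    finrank k (Submodule.pi Set.univ p) = ∑ i, finrank k (p i) := by
  rw [(Submodule.piUnivEquiv p).finrank_eq, finrank_pi_fintype]

theorem LinearMap.map_compLeft_pi {R M M₂ : Type*} [Semiring R] [AddCommMonoid M] [Module R M]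
    [AddCommMonoid M₂] [Module R M₂] (f : M →ₗ[R] M₂) (I : Type*) (p : I → Submodule R M) :
    (Submodule.pi Set.univ p).map (f.compLeft I) = Submodule.pi Set.univ fun i => (p i).map f := by
  refine Submodule.ext fun x => ⟨?_, fun hx => ?_⟩
  · rintro ⟨y, hy, rfl⟩ i -
    exact ⟨y i, hy i trivial, rfl⟩
  · choose y hy hfy using fun i => hx i trivial
    exact ⟨y, fun i _ => hy i, funext hfy⟩

theorem LinearMap.ker_compLeft_inf_pi {R M M₂ : Type*} [Semiring R] [AddCommMonoid M]
    [Module R M] [AddCommMonoid M₂] [Module R M₂] (f : M →ₗ[R] M₂) (I : Type*)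
    (p : I → Submodule R M) :
    LinearMap.ker (f.compLeft I) ⊓ Submodule.pi Set.univ p =
      Submodule.pi Set.univ fun i => LinearMap.ker f ⊓ p i := by
  ext x
  simp [LinearMap.ker_compLeft, Submodule.mem_pi, forall_and]

end LinearAlgebra

section Graded

theorem MvPolynomial.IsHomogeneous.homogeneousComponent_mul_left {σ R : Type*}
    [CommSemiring R] {f : MvPolynomial σ R} {d : ℕ} (hf : f.IsHomogeneous d) (g : MvPolynomial σ R)
    (m : ℕ) :
    homogeneousComponent m (f * g) = if d ≤ m then f * homogeneousComponent (m - d) g else 0 := by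
  let _ := MvPolynomial.gradedAlgebra (σ := σ) (R := R)
  have hf' := (mem_homogeneousSubmodule d f).mpr hf
  split_ifs with hdm
  · rw [← decomposition.decompose'_apply, ← decomposition.decompose'_apply]
    exact DirectSum.coe_decompose_mul_of_left_mem_of_le _ hf' hdm
  · rw [← decomposition.decompose'_apply]
    exact DirectSum.coe_decompose_mul_of_left_mem_of_not_le _ hf' hdm

theorem homogZ_of_nonneg {z : ℤ} (hz : 0 ≤ z) :
    homogZ K n z = homogeneousSubmodule (Fin n) K z.toNat := by
  simp [homogZ, iSup_pos hz]

theorem homogZ_of_neg {z : ℤ} (hz : z < 0) : homogZ K n z = ⊥ := by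
  simp [homogZ, iSup_neg (not_le.mpr hz)]

instance (z : ℤ) : FiniteDimensional K (homogZ K n z) := by
  rcases le_or_gt 0 z with hz | hz
  · rw [homogZ_of_nonneg hz]
    exact Module.Finite.iff_fg.mpr (homogeneousSubmodule_fg _ _ _)
  · rw [homogZ_of_neg hz]
    infer_instance

theorem mul_mem_homogZ {a b : ℤ} {f g : PolyS K n} (hf : f ∈ homogZ K n a)
    (hg : g ∈ homogZ K n b) : f * g ∈ homogZ K n (a + b) := by
  rcases lt_or_ge a 0 with ha | ha
  · rw [homogZ_of_neg ha, Submodule.mem_bot] at hf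
    simp [hf]
  rcases lt_or_ge b 0 with hb | hb
  · rw [homogZ_of_neg hb, Submodule.mem_bot] at hg
    simp [hg]
  rw [homogZ_of_nonneg ha, mem_homogeneousSubmodule] at hf
  rw [homogZ_of_nonneg hb, mem_homogeneousSubmodule] at hg
  rw [homogZ_of_nonneg (add_nonneg ha hb), mem_homogeneousSubmodule, Int.toNat_add ha hb]
  exact hf.mul hg

def homogProj (z : ℤ) : PolyS K n →ₗ[K] PolyS K n :=
  if 0 ≤ z then homogeneousComponent z.toNat else 0

theorem homogProj_mem (z : ℤ) (f : PolyS K n) : homogProj z f ∈ homogZ K n z := by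
  rcases le_or_gt 0 z with hz | hz
  · rw [homogZ_of_nonneg hz, homogProj, if_pos hz]
    exact homogeneousComponent_mem _ _
  · simp [homogProj, if_neg (not_le.mpr hz)]

theorem homogProj_of_mem {z : ℤ} {f : PolyS K n} (hf : f ∈ homogZ K n z) :
    homogProj z f = f := by
  rcases le_or_gt 0 z with hz | hz
  · rw [homogZ_of_nonneg hz] at hf
    rw [homogProj, if_pos hz, homogeneousComponent_of_mem hf, if_pos rfl]
  · rw [homogZ_of_neg hz, Submodule.mem_bot] at hf
    simp [hf]

theorem homogProj_mul_of_mem_left {a : ℤ} {f : PolyS K n} (hf : f ∈ homogZ K n a) (b : ℤ)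
    (g : PolyS K n) : homogProj (a + b) (f * g) = f * homogProj b g := by
  rcases lt_or_ge a 0 with ha | ha
  · rw [homogZ_of_neg ha, Submodule.mem_bot] at hf
    simp [hf]
  rw [homogZ_of_nonneg ha, mem_homogeneousSubmodule] at hf
  simp only [homogProj]
  split_ifs with hab hb hb
  · rw [hf.homogeneousComponent_mul_left, if_pos (by omega),
      show (a + b).toNat - a.toNat = b.toNat by omega]
  · rw [hf.homogeneousComponent_mul_left, if_neg (by omega)]
    simp
  · omega
  · simp

end Graded

section FreePieces

open scoped Matrix

variable {r s : ℕ}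

theorem mem_freePiece {dg : Fin r → ℤ} {ℓ : ℤ} {x : Fin r → PolyS K n} :
    x ∈ freePiece dg ℓ ↔ ∀ p, x p ∈ homogZ K n (ℓ - dg p) := by
  simp [freePiece, Submodule.mem_pi]

instance (dg : Fin r → ℤ) (ℓ : ℤ) : FiniteDimensional K (freePiece (K := K) (n := n) dg ℓ) :=
  inferInstanceAs (FiniteDimensional K (Submodule.pi Set.univ fun p => homogZ K n (ℓ - dg p)))

variable {A : Matrix (Fin r) (Fin s) (PolyS K n)} {d : Fin r → ℤ} {d' : Fin s → ℤ}

theorem mulVec_mem_freePiece (hA : ∀ p q, A p q ∈ homogZ K n (d' q - d p)) {ℓ : ℤ}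
    {x : Fin s → PolyS K n} (hx : x ∈ freePiece d' ℓ) : A *ᵥ x ∈ freePiece d ℓ := by
  rw [mem_freePiece] at hx ⊢
  intro p
  rw [Matrix.mulVec, dotProduct]
  refine Submodule.sum_mem _ fun q _ => ?_
  convert mul_mem_homogZ (hA p q) (hx q) using 2
  ring

theorem map_mulVec_freePiece (hA : ∀ p q, A p q ∈ homogZ K n (d' q - d p)) (ℓ : ℤ) :
    (freePiece d' ℓ).map (A.mulVecLin.restrictScalars K) =
      (LinearMap.range A.mulVecLin).restrictScalars K ⊓ freePiece d ℓ := by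
  refine le_antisymm ?_ ?_
  · rintro _ ⟨y, hy, rfl⟩
    exact ⟨⟨y, rfl⟩, mulVec_mem_freePiece hA hy⟩
  · rintro x ⟨⟨y, rfl⟩, hx⟩
    -- project the preimage `y` componentwise onto the degrees that `freePiece d' ℓ` asks for
    refine ⟨fun q => homogProj (ℓ - d' q) (y q), mem_freePiece.mpr fun q => homogProj_mem _ _, ?_⟩
    funext p
    have hproj : ∀ q, A p q * homogProj (ℓ - d' q) (y q) = homogProj (ℓ - d p) (A p q * y q) :=
      fun q => by rw [← homogProj_mul_of_mem_left (hA p q), sub_add_sub_cancel']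
    simp only [LinearMap.restrictScalars_apply, Matrix.mulVecLin_apply, Matrix.mulVec,
      dotProduct, hproj, ← map_sum]
    exact homogProj_of_mem (mem_freePiece.mp hx p)

end FreePieces

section CoComplexCohomology

open scoped Matrix

theorem CoComplex.imSub_le_ker (E : CoComplex K n) (j : ℕ) :
    E.imSub j ≤ (LinearMap.ker (E.dd j).mulVecLin).restrictScalars K := by
  cases j with
  | zero => exact bot_le
  | succ j =>
    rintro _ ⟨y, rfl⟩
    simp only [Submodule.restrictScalars_mem, LinearMap.mem_ker, Matrix.mulVecLin_apply,
      Matrix.mulVec_mulVec, E.isComplex, Matrix.zero_mulVec]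

instance (E : CoComplex K n) (j : ℕ) (ℓ : ℤ) : FiniteDimensional K (E.kerPiece j ℓ) :=
  Submodule.finiteDimensional_of_le inf_le_right

theorem cohomDim_eq_finrank_sub (E : CoComplex K n) (j : ℕ) (ℓ : ℤ) :
    (cohomDim E j ℓ : ℤ) = finrank K (E.kerPiece j ℓ) -
      finrank K (E.imSub j ⊓ freePiece (E.deg j) ℓ : Submodule K _) := by
  have hquot := Submodule.finrank_quotient_add_finrank
    (Submodule.comap (E.kerPiece j ℓ).subtype (E.imSub j))
  have hinter : E.kerPiece j ℓ ⊓ E.imSub j = E.imSub j ⊓ freePiece (E.deg j) ℓ := by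
    rw [CoComplex.kerPiece, inf_comm, ← inf_assoc, inf_eq_left.mpr (E.imSub_le_ker j)]
  rw [← Submodule.finrank_map_subtype_eq, Submodule.map_comap_subtype, hinter] at hquot
  rw [cohomDim]
  omega

end CoComplexCohomology

section DoubleComplex

variable {k : Type*} [DivisionRing k] {M : ℕ → ℕ → Type*} [∀ i j, AddCommGroup (M i j)]
  [∀ i j, Module k (M i j)] (X : ∀ i j, Submodule k (M i j))
  (h : ∀ i j, M (i + 1) j →ₗ[k] M i j) (v : ∀ i j, M i j →ₗ[k] M i (j + 1))

def vCocycles (i j : ℕ) : Submodule k (M i j) := LinearMap.ker (v i j) ⊓ X i j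

def vBoundaries : ∀ i j, Submodule k (M i j)
  | _, 0 => ⊥
  | i, j + 1 => (X i j).map (v i j)

def hBoundaries (i j : ℕ) : Submodule k (M i j) := (X (i + 1) j).map (h i j)

theorem vBoundaries_zero (i : ℕ) : vBoundaries X v i 0 = ⊥ := rfl

variable [∀ i j, FiniteDimensional k (X i j)]

instance (i j : ℕ) : FiniteDimensional k (vCocycles X v i j) :=
  Submodule.finiteDimensional_of_le inf_le_right

instance (i j : ℕ) : FiniteDimensional k (hBoundaries X h i j) :=
  inferInstanceAs (FiniteDimensional k ((X (i + 1) j).map (h i j)))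

theorem finrank_vCocycles_add_finrank_vBoundaries (i j : ℕ) :
    finrank k (vCocycles X v i j) + finrank k (vBoundaries X v i (j + 1)) = finrank k (X i j) := by
  rw [add_comm]
  exact (v i j).finrank_map_add_finrank_ker_inf (X i j)

theorem finrank_hBoundaries_add_finrank_hBoundaries
    (hexact : ∀ i j, LinearMap.ker (h i j) ⊓ X (i + 1) j = hBoundaries X h (i + 1) j)
    (i j : ℕ) :
    finrank k (hBoundaries X h i j) + finrank k (hBoundaries X h (i + 1) j) =
      finrank k (X (i + 1) j) := by
  rw [← hexact]
  exact (h i j).finrank_map_add_finrank_ker_inf (X (i + 1) j)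

theorem sum_range_neg_one_pow_sub_mul_vCohomology (i : ℕ) :
    ∑ j ∈ range (i + 1), (-1 : ℤ) ^ (i - j) *
        ((finrank k (vCocycles X v i j) : ℤ) - finrank k (vBoundaries X v i j)) =
      ∑ j ∈ range (i + 1), (-1 : ℤ) ^ (i - j) * finrank k (X i j) -
        finrank k (vBoundaries X v i (i + 1)) := by
  have hb := sum_range_neg_one_pow_sub_mul_add (fun j => (finrank k (vBoundaries X v i j) : ℤ)) i
  rw [vBoundaries_zero, finrank_bot, Nat.cast_zero, mul_zero, add_zero] at hb
  rw [eq_sub_iff_add_eq, ← hb, ← sum_add_distrib]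
  refine sum_congr rfl fun j _ => ?_
  rw [← finrank_vCocycles_add_finrank_vBoundaries X v i j]
  push_cast
  ring

theorem sum_Ico_neg_one_pow_sub_mul_finrank {L : ℕ} (hL : ∀ j, X (L + 1) j = ⊥)
    (hexact : ∀ i j, LinearMap.ker (h i j) ⊓ X (i + 1) j = hBoundaries X h (i + 1) j)
    {j : ℕ} (hj : j ≤ L) :
    ∑ i ∈ Ico j (L + 1), (-1 : ℤ) ^ (i - j) * finrank k (X i j) =
      finrank k (X j j) - finrank k (hBoundaries X h j j) := by
  have htop : hBoundaries X h L j = ⊥ := by rw [hBoundaries, hL, Submodule.map_bot]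
  rw [sum_Ico_neg_one_pow_sub_mul_of_add _ (fun i => (finrank k (hBoundaries X h i j) : ℤ)) hj
    fun i => by exact_mod_cast (finrank_hBoundaries_add_finrank_hBoundaries X h hexact i j).symm,
    htop, finrank_bot, Nat.cast_zero, mul_zero, add_zero]

theorem sum_neg_one_pow_sub_mul_vCohomology_eq_sum_diag {L : ℕ} (hL : ∀ j, X (L + 1) j = ⊥)
    (hexact : ∀ i j, LinearMap.ker (h i j) ⊓ X (i + 1) j = hBoundaries X h (i + 1) j) :
    ∑ i ∈ range (L + 1), ∑ j ∈ range (i + 1), (-1 : ℤ) ^ (i - j) *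
        ((finrank k (vCocycles X v i j) : ℤ) - finrank k (vBoundaries X v i j)) =
      ∑ j ∈ range (L + 1),
        ((finrank k (vCocycles X v j j) : ℤ) - finrank k (hBoundaries X h j j)) := by
  have hswap : ∑ i ∈ range (L + 1), ∑ j ∈ range (i + 1), (-1 : ℤ) ^ (i - j) * finrank k (X i j) =
      ∑ j ∈ range (L + 1), ∑ i ∈ Ico j (L + 1), (-1 : ℤ) ^ (i - j) * finrank k (X i j) := by
    simp only [range_eq_Ico]
    exact (sum_Ico_Ico_comm 0 (L + 1) fun j i => (-1 : ℤ) ^ (i - j) * finrank k (X i j)).symm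
  simp only [sum_range_neg_one_pow_sub_mul_vCohomology, sum_sub_distrib, hswap]
  rw [← sum_sub_distrib, ← sum_sub_distrib]
  refine sum_congr rfl fun j hj => ?_
  rw [sum_Ico_neg_one_pow_sub_mul_finrank X h hL hexact (Nat.lt_succ_iff.mp (mem_range.mp hj)),
    ← finrank_vCocycles_add_finrank_vBoundaries X v j j]
  push_cast
  ring

theorem finrank_map_hBoundaries_add_finrank_le
    (hXh : ∀ i j, hBoundaries X h i j ≤ X i j)
    (hXv : ∀ i j, (X i j).map (v i j) ≤ X i (j + 1))
    (hvv : ∀ i j, v i (j + 1) ∘ₗ v i j = 0)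
    (hvh : ∀ i j, v i j ∘ₗ h i j = h i (j + 1) ∘ₗ v (i + 1) j)
    (hexact : ∀ i j, LinearMap.ker (h i j) ⊓ X (i + 1) j = hBoundaries X h (i + 1) j)
    (j : ℕ) :
    finrank k ((hBoundaries X h j j).map (v j j)) +
        finrank k (LinearMap.ker (v (j + 1) (j + 1)) ⊓ hBoundaries X h (j + 1) (j + 1) :
          Submodule k _)
      ≤ finrank k (vCocycles X v (j + 1) (j + 1)) := by
  -- `v (B_h (X j j)) = h C` for `C = v (X (j+1) j)`, and row exactness puts the kernel of `h` on
  -- `C` inside `G`; hence `dim h C + dim G = dim (G ⊔ C) ≤ dim Z_v (X (j+1) (j+1))`.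
  set C := (X (j + 1) j).map (v (j + 1) j)
  set G := LinearMap.ker (v (j + 1) (j + 1)) ⊓ hBoundaries X h (j + 1) (j + 1)
  have hCX : C ≤ X (j + 1) (j + 1) := hXv _ _
  have hCker : C ≤ LinearMap.ker (v (j + 1) (j + 1)) := by
    rintro _ ⟨u, -, rfl⟩
    exact LinearMap.congr_fun (hvv (j + 1) j) u
  have hmap : (hBoundaries X h j j).map (v j j) = C.map (h j (j + 1)) := by
    rw [hBoundaries, ← Submodule.map_comp, ← Submodule.map_comp, hvh]
  have hker : LinearMap.ker (h j (j + 1)) ⊓ C = G ⊓ C := by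
    rw [← inf_eq_right.mpr hCX, ← inf_assoc, hexact, inf_eq_right.mpr hCX, inf_comm G,
      ← inf_assoc, inf_eq_left.mpr hCker, inf_comm]
  have hGC : G ⊔ C ≤ vCocycles X v (j + 1) (j + 1) :=
    sup_le (inf_le_inf_left _ (hXh _ _)) (le_inf hCker hCX)
  have hrank := (h j (j + 1)).finrank_map_add_finrank_ker_inf C
  rw [hker] at hrank
  have := Submodule.finrank_sup_add_finrank_inf_eq G C
  have := Submodule.finrank_mono hGC
  rw [hmap]
  omega

theorem sum_neg_one_pow_sub_mul_vCohomology_nonneg {L : ℕ} (hL : ∀ j, X (L + 1) j = ⊥)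
    (hXh : ∀ i j, hBoundaries X h i j ≤ X i j)
    (hXv : ∀ i j, (X i j).map (v i j) ≤ X i (j + 1))
    (hvv : ∀ i j, v i (j + 1) ∘ₗ v i j = 0)
    (hvh : ∀ i j, v i j ∘ₗ h i j = h i (j + 1) ∘ₗ v (i + 1) j)
    (hexact : ∀ i j, LinearMap.ker (h i j) ⊓ X (i + 1) j = hBoundaries X h (i + 1) j) :
    0 ≤ ∑ i ∈ range (L + 1), ∑ j ∈ range (i + 1), (-1 : ℤ) ^ (i - j) *
        ((finrank k (vCocycles X v i j) : ℤ) - finrank k (vBoundaries X v i j)) := by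
  rw [sum_neg_one_pow_sub_mul_vCohomology_eq_sum_diag X h v hL hexact]
  set d : ℕ → ℤ := fun j => finrank k (vCocycles X v j j) -
    finrank k (LinearMap.ker (v j j) ⊓ hBoundaries X h j j : Submodule k _)
  have hstep : ∀ j, d j - d (j + 1) ≤
      finrank k (vCocycles X v j j) - finrank k (hBoundaries X h j j) := fun j => by
    have := (v j j).finrank_map_add_finrank_ker_inf (hBoundaries X h j j)
    have := finrank_map_hBoundaries_add_finrank_le X h v hXh hXv hvv hvh hexact j
    simp only [d]
    omega
  have hd0 : 0 ≤ d 0 := sub_nonneg.mpr (Nat.cast_le.mpr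
    (Submodule.finrank_mono (inf_le_inf_left _ (hXh 0 0))))
  have hdL : d (L + 1) ≤ 0 := by
    have : vCocycles X v (L + 1) (L + 1) = ⊥ := by rw [vCocycles, hL, inf_bot_eq]
    simp only [d]
    rw [this, finrank_bot, Nat.cast_zero, zero_sub, neg_nonpos]
    exact Nat.cast_nonneg _
  calc (0 : ℤ) ≤ d 0 - d (L + 1) := by omega
    _ = ∑ j ∈ range (L + 1), (d j - d (j + 1)) := (sum_range_sub' d (L + 1)).symm
    _ ≤ _ := sum_le_sum fun j _ => hstep j

end DoubleComplex

section TensorDoubleComplex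

open scoped Matrix

variable (F : FreeComplex K n) (E : CoComplex K n)

def tensorPiece (i j : ℕ) : Submodule K (Fin (F.rk i) → Fin (E.rk j) → PolyS K n) :=
  Submodule.pi Set.univ fun p => freePiece (E.deg j) (-(F.deg i p))

def hMap (i j : ℕ) : (Fin (F.rk (i + 1)) → Fin (E.rk j) → PolyS K n) →ₗ[K]
    (Fin (F.rk i) → Fin (E.rk j) → PolyS K n) :=
  (Matrix.ofLinearEquiv K).symm.toLinearMap ∘ₗ mulLeftLinearMap _ K (F.dd i) ∘ₗ
    (Matrix.ofLinearEquiv K).toLinearMap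

def vMap (i j : ℕ) : (Fin (F.rk i) → Fin (E.rk j) → PolyS K n) →ₗ[K]
    (Fin (F.rk i) → Fin (E.rk (j + 1)) → PolyS K n) :=
  LinearMap.compLeft ((E.dd j).mulVecLin.restrictScalars K) (Fin (F.rk i))

instance (i j : ℕ) : FiniteDimensional K (tensorPiece F E i j) :=
  inferInstanceAs (FiniteDimensional K
    (Submodule.pi Set.univ fun p => freePiece (K := K) (n := n) (E.deg j) (-(F.deg i p))))

variable {F E}

theorem of_hMap {i j : ℕ} (u : Fin (F.rk (i + 1)) → Fin (E.rk j) → PolyS K n) :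
    Matrix.of (hMap F E i j u) = F.dd i * Matrix.of u := rfl

theorem of_vMap {i j : ℕ} (u : Fin (F.rk i) → Fin (E.rk j) → PolyS K n) :
    Matrix.of (vMap F E i j u) = Matrix.of u * (E.dd j)ᵀ := by
  ext p : 1
  rw [Matrix.mul_apply_eq_vecMul, Matrix.vecMul_transpose]
  rfl

theorem hMap_apply_col {i j : ℕ} (u : Fin (F.rk (i + 1)) → Fin (E.rk j) → PolyS K n)
    (q : Fin (E.rk j)) : (fun p => hMap F E i j u p q) = F.dd i *ᵥ fun p => u p q := rfl

theorem mem_tensorPiece_iff_col {i j : ℕ} {u : Fin (F.rk i) → Fin (E.rk j) → PolyS K n} :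
    u ∈ tensorPiece F E i j ↔ ∀ q, (fun p => u p q) ∈ freePiece (F.deg i) (-(E.deg j q)) := by
  simp only [tensorPiece, Submodule.mem_pi, Set.mem_univ, true_implies, mem_freePiece]
  have hdeg : ∀ p q, -(F.deg i p) - E.deg j q = -(E.deg j q) - F.deg i p := fun _ _ => by ring
  simp only [hdeg]
  exact forall_comm

theorem tensorPiece_len_succ (j : ℕ) : tensorPiece F E (F.len + 1) j = ⊥ := by
  have : IsEmpty (Fin (F.rk (F.len + 1))) := by
    rw [F.rk_eq_zero _ (Nat.lt_succ_self _)]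
    infer_instance
  exact Submodule.eq_bot_of_subsingleton

theorem vMap_comp_vMap (i j : ℕ) : vMap F E i (j + 1) ∘ₗ vMap F E i j = 0 := by
  refine LinearMap.ext fun u => funext fun p => ?_
  simp only [vMap, LinearMap.comp_apply, LinearMap.compLeft_apply, Function.comp_apply,
    LinearMap.restrictScalars_apply, Matrix.mulVecLin_apply, Matrix.mulVec_mulVec, E.isComplex,
    Matrix.zero_mulVec, LinearMap.zero_apply, Pi.zero_apply]

theorem vMap_comp_hMap (i j : ℕ) :
    vMap F E i j ∘ₗ hMap F E i j = hMap F E i (j + 1) ∘ₗ vMap F E (i + 1) j := by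
  refine LinearMap.ext fun u => Matrix.of.injective ?_
  simp only [LinearMap.comp_apply, of_vMap, of_hMap, Matrix.mul_assoc]

theorem hBoundaries_tensorPiece_le (i j : ℕ) :
    hBoundaries (tensorPiece F E) (hMap F E) i j ≤ tensorPiece F E i j := by
  rintro _ ⟨u, hu, rfl⟩
  rw [SetLike.mem_coe, mem_tensorPiece_iff_col] at hu
  rw [mem_tensorPiece_iff_col]
  exact fun q => mulVec_mem_freePiece (F.isHomog i) (hu q)

theorem map_vMap_tensorPiece (i j : ℕ) :
    (tensorPiece F E i j).map (vMap F E i j) = Submodule.pi Set.univ fun p =>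
      E.imSub (j + 1) ⊓ freePiece (E.deg (j + 1)) (-(F.deg i p)) := by
  rw [vMap, tensorPiece, LinearMap.map_compLeft_pi]
  simp only [map_mulVec_freePiece (E.isHomog j)]
  rfl

theorem vCocycles_tensorPiece (i j : ℕ) :
    vCocycles (tensorPiece F E) (vMap F E) i j =
      Submodule.pi Set.univ fun p => E.kerPiece j (-(F.deg i p)) := by
  rw [vCocycles, vMap, tensorPiece, LinearMap.ker_compLeft_inf_pi, LinearMap.ker_restrictScalars]
  rfl

theorem vBoundaries_tensorPiece (i j : ℕ) :
    vBoundaries (tensorPiece F E) (vMap F E) i j =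
      Submodule.pi Set.univ fun p => E.imSub j ⊓ freePiece (E.deg j) (-(F.deg i p)) := by
  cases j with
  | zero => simp only [vBoundaries_zero, CoComplex.imSub, bot_inf_eq, Submodule.pi_univ_bot]
  | succ j => exact map_vMap_tensorPiece i j

theorem map_vMap_tensorPiece_le (i j : ℕ) :
    (tensorPiece F E i j).map (vMap F E i j) ≤ tensorPiece F E i (j + 1) := by
  rw [map_vMap_tensorPiece]
  exact Submodule.pi_mono fun _ _ => inf_le_right

theorem ker_hMap_inf_tensorPiece (hF : IsResolution F) (i j : ℕ) :
    LinearMap.ker (hMap F E i j) ⊓ tensorPiece F E (i + 1) j =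
      hBoundaries (tensorPiece F E) (hMap F E) (i + 1) j := by
  refine le_antisymm ?_ ?_
  · rintro u ⟨hu0, hu⟩
    rw [SetLike.mem_coe, mem_tensorPiece_iff_col] at hu
    have hcol : ∀ q, ∃ w ∈ freePiece (F.deg (i + 2)) (-(E.deg j q)),
        F.dd (i + 1) *ᵥ w = fun p => u p q := by
      intro q
      have hker : (fun p => u p q) ∈ LinearMap.ker (F.dd i).mulVecLin := by
        rw [LinearMap.mem_ker, Matrix.mulVecLin_apply, ← hMap_apply_col, LinearMap.mem_ker.mp hu0]
        rfl
      rw [hF i] at hker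
      exact (map_mulVec_freePiece (F.isHomog (i + 1)) _).ge ⟨hker, hu q⟩
    choose w hw hwu using hcol
    exact ⟨fun p q => w q p, mem_tensorPiece_iff_col.mpr hw, funext fun p => funext fun q =>
      congr_fun (hwu q) p⟩
  · rintro _ ⟨u, hu, rfl⟩
    refine ⟨?_, hBoundaries_tensorPiece_le (i + 1) j ⟨u, hu, rfl⟩⟩
    rw [SetLike.mem_coe, LinearMap.mem_ker]
    refine Matrix.of.injective ?_
    rw [of_hMap, of_hMap, ← Matrix.mul_assoc, F.isComplex, Matrix.zero_mul]
    rfl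

theorem sum_cohomDim_eq_finrank_vCocycles_sub (i j : ℕ) :
    ∑ p : Fin (F.rk i), (cohomDim E j (-(F.deg i p)) : ℤ) =
      finrank K (vCocycles (tensorPiece F E) (vMap F E) i j) -
        finrank K (vBoundaries (tensorPiece F E) (vMap F E) i j) := by
  rw [vCocycles_tensorPiece, vBoundaries_tensorPiece, Submodule.finrank_pi_univ,
    Submodule.finrank_pi_univ]
  push_cast
  rw [← sum_sub_distrib]
  exact sum_congr rfl fun p _ => cohomDim_eq_finrank_sub E j _

end TensorDoubleComplex

theorem pairing_nonneg_general (K : Type) [Field K] (n : ℕ)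
    (F : FreeComplex K n) (hF : IsResolution F)
    (E : CoComplex K n) :
    0 ≤ pairing F E := by
  have key := sum_neg_one_pow_sub_mul_vCohomology_nonneg (tensorPiece F E) (hMap F E) (vMap F E)
    tensorPiece_len_succ hBoundaries_tensorPiece_le map_vMap_tensorPiece_le vMap_comp_vMap
    vMap_comp_hMap (ker_hMap_inf_tensorPiece hF)
  simpa only [pairing, sum_cohomDim_eq_finrank_vCocycles_sub] using key

/-- If `E : 0 → E⁰ → ⋯ → Eⁿ → 0` is a complex of graded free
`S`-modules and `F` is a graded free resolution of a finitely generated graded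
`S`-module `M` (namely of `M = coker (F₁ → F₀)`), then
`⟨F, E⟩ = Σ_j χ(F_{≥j} ⊗ H^j(E)) = Σ_{j≤i,k} (-1)^{i-j} β_{i,k}(F) dim_K (H^j E)_{-k} ≥ 0`. -/
theorem pairing_nonneg (K : Type) [Field K] (n : ℕ)
    (F : FreeComplex K n) (hF : IsResolution F)
    (E : CoComplex K n) (hE : E.len ≤ n) :
    0 ≤ pairing F E :=
  pairing_nonneg_general K n F hF E

end
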